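/- Let β ∈ (0, 1/2) with β ≠ 1/3, set c = cos(2πβ), and let n ∈ ℕ. For ω ∈ Ĩⁿ(β) with ω ≠ ωₙ* define u₀(ω) = 1 + r_β(ω)·√(2 + 2c) and v₀(ω) = 3·cos(ωL); then (u₀(ω), v₀(ω)) ≠ (0, 0), and the limit, as ω → ωₙ* with ω ∈ Ĩⁿ(β) and ω ≠ ωₙ*, of u₀(ω)²/(u₀(ω)² + v₀(ω)²) equals 0 if β ∈ (0, 1/3), and equals 1 if β ∈ (1/3, 1/2). (This is the continuous extension at ωₙ* of the normalized decaying eigenvector of the transfer matrix: it tends to (0, 1) for β < 1/3 and to (1, 0) for β > 1/3.) -/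

import Mathlib

/-!
With `t = cos (ωL)` and `c = cos (2πβ)`, clearing the square root `√(2 + 2c)` gives
`u₀ = (Y + √(Y² - 36 t²)) / 2` with `Y = 9t² - 1 - 2c`, and `v₀ = 3t`. As `ω → ωₙ*` we have
`t → 0` and `Y → -1 - 2c`, whose sign is that of `β - 1/3`.
If `β < 1/3` then `Y < 0` near `ωₙ*`, and multiplying by the conjugate `√(Y² - 36t²) - Y ≥ -Y`
gives `|u₀| ≤ 18 t² / (-Y)`, so `u₀ / v₀ → 0`. If `β > 1/3` then `u₀ ≥ Y / 2 ≥ (-1 - 2c) / 2 > 0`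
everywhere while `v₀ → 0`, so `v₀ / u₀ → 0`. In both cases the quotient `u₀² / (u₀² + v₀²)` is
a continuous function of that ratio. Finally `v₀ ≠ 0` on `Ĩⁿ(β) \ {ωₙ*}`, since `ωₙ* L` is the
only zero of `cos` in `(nπ, (n+1)π)`.
-/

open Real Filter Topology

/-- The edge length `L = 1/√3`. -/
noncomputable def L : ℝ := 1 / Real.sqrt 3

/-- The Dirac frequency `ωₙ* = (2n+1)π/(2L)`. -/
noncomputable def ωstar (n : ℕ) : ℝ := (2 * n + 1) * π / (2 * L)

/-- `g_β(ω) = (9·cos²(ωL) − 3 − 2·cos(2πβ)) / √(2 + 2·cos(2πβ))`. -/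
noncomputable def g (β ω : ℝ) : ℝ :=
  (9 * Real.cos (ω * L) ^ 2 - 3 - 2 * Real.cos (2 * π * β)) /
    Real.sqrt (2 + 2 * Real.cos (2 * π * β))

/-- `a(β) = arccos(√(3 + 2·cos(2πβ) − 2·√(2 + 2·cos(2πβ)))/3)`. -/
noncomputable def aβ (β : ℝ) : ℝ :=
  Real.arccos (Real.sqrt (3 + 2 * Real.cos (2 * π * β) -
    2 * Real.sqrt (2 + 2 * Real.cos (2 * π * β))) / 3)

/-- The open interval `Ĩⁿ(β) = (nπ/L + a(β)/L, (n+1)π/L − a(β)/L)`. -/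
noncomputable def Itilde (β : ℝ) (n : ℕ) : Set ℝ :=
  Set.Ioo (n * π / L + aβ β / L) ((n + 1) * π / L - aβ β / L)

/-- `r_β(ω) = (g_β(ω) + √(g_β(ω)² − 4))/2`. -/
noncomputable def r (β ω : ℝ) : ℝ := (g β ω + Real.sqrt (g β ω ^ 2 - 4)) / 2

/-- First component `u₀(ω) = 1 + r_β(ω)·√(2 + 2·cos(2πβ))` of the transfer-matrix
eigenvector. -/
noncomputable def u₀ (β ω : ℝ) : ℝ :=
  1 + r β ω * Real.sqrt (2 + 2 * Real.cos (2 * π * β))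

/-- Second component `v₀(ω) = 3·cos(ωL)` of the transfer-matrix eigenvector. -/
noncomputable def v₀ (ω : ℝ) : ℝ := 3 * Real.cos (ω * L)

lemma abs_add_sqrt_sq_sub_le {Y p : ℝ} (hY : Y < 0) (hp : 0 ≤ p) :
    |Y + √(Y ^ 2 - p)| ≤ p / -Y := by
  rw [le_div_iff₀ (neg_pos.2 hY)]
  rcases le_or_gt p (Y ^ 2) with hpY | hpY
  · -- `(Y + e)(e - Y) = -p` for `e = √(Y² - p)`, and `e - Y ≥ -Y`
    have he : √(Y ^ 2 - p) ^ 2 = Y ^ 2 - p := Real.sq_sqrt (sub_nonneg.2 hpY)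
    have he0 := Real.sqrt_nonneg (Y ^ 2 - p)
    rw [abs_of_nonpos (by nlinarith)]
    nlinarith
  · -- here `√` of the negative number `Y² - p` is `0`, and `-Y ≤ p / -Y` since `Y² < p`
    rw [Real.sqrt_eq_zero_of_nonpos (by linarith), add_zero, abs_of_neg hY]
    nlinarith

lemma abs_add_sqrt_sq_sub_div_le {Y t : ℝ} (hY : Y < 0) :
    |(Y + √(Y ^ 2 - 36 * t ^ 2)) / 2 / (3 * t)| ≤ 6 * |t| / -Y := by
  rcases eq_or_ne t 0 with rfl | ht
  · simp -- `x / 0 = 0`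
  have hroot := abs_add_sqrt_sq_sub_le (p := 36 * t ^ 2) hY (by positivity)
  rw [div_div, show 2 * (3 * t) = 6 * t by ring, abs_div, abs_mul,
    abs_of_pos (by norm_num : (0 : ℝ) < 6), div_le_iff₀ (by positivity)]
  calc |Y + √(Y ^ 2 - 36 * t ^ 2)| ≤ 36 * t ^ 2 / -Y := hroot
    _ = 6 * |t| / -Y * (6 * |t|) := by rw [← sq_abs t]; ring

lemma sqrt_div_sq_sub_mul {A s : ℝ} (hs : 0 < s) :
    √((A / s) ^ 2 - 4) * s = √(A ^ 2 - 4 * s ^ 2) := by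
  rw [← Real.sqrt_sq hs.le, ← Real.sqrt_mul' _ (sq_nonneg s), Real.sqrt_sq hs.le]
  congr 1
  field_simp

lemma cos_two_pi_div_three : Real.cos (2 * π / 3) = -(1 / 2) := by
  rw [show 2 * π / 3 = π - π / 3 by ring, Real.cos_pi_sub, Real.cos_pi_div_three]

lemma neg_one_lt_cos_two_pi_mul {β : ℝ} (h0 : 0 ≤ β) (h1 : β < 1 / 2) :
    -1 < Real.cos (2 * π * β) := by
  rw [← Real.cos_pi]
  exact Real.cos_lt_cos_of_nonneg_of_le_pi (by positivity) le_rfl (by nlinarith [Real.pi_pos])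

lemma neg_half_lt_cos_two_pi_mul {β : ℝ} (h0 : 0 ≤ β) (h1 : β < 1 / 3) :
    -(1 / 2) < Real.cos (2 * π * β) := by
  rw [← cos_two_pi_div_three]
  exact Real.cos_lt_cos_of_nonneg_of_le_pi (by positivity) (by linarith [Real.pi_pos])
    (by nlinarith [Real.pi_pos])

lemma cos_two_pi_mul_lt_neg_half {β : ℝ} (h0 : 1 / 3 < β) (h1 : β ≤ 1 / 2) :
    Real.cos (2 * π * β) < -(1 / 2) := by
  rw [← cos_two_pi_div_three]
  exact Real.cos_lt_cos_of_nonneg_of_le_pi (by positivity) (by nlinarith [Real.pi_pos])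
    (by nlinarith [Real.pi_pos])

lemma eq_of_cos_eq_zero_of_mem_Ioo {x : ℝ} {n : ℤ} (h : Real.cos x = 0)
    (hx : x ∈ Set.Ioo (n * π) ((n + 1) * π)) : x = (2 * n + 1) * π / 2 := by
  obtain ⟨k, rfl⟩ := Real.cos_eq_zero_iff.1 h
  obtain ⟨hlo, hhi⟩ := hx
  have hk : k = n := by
    have h1 : (2 * n : ℝ) < 2 * k + 1 := by nlinarith [Real.pi_pos]
    have h2 : (2 * k + 1 : ℝ) < 2 * n + 2 := by nlinarith [Real.pi_pos]
    have h1' : 2 * n < 2 * k + 1 := by exact_mod_cast h1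
    have h2' : 2 * k + 1 < 2 * n + 2 := by exact_mod_cast h2
    omega
  rw [hk]

lemma tendsto_div_zero_of_le {α : Type*} {l : Filter α} {u v : α → ℝ} {δ : ℝ} (hδ : 0 < δ)
    (hu : ∀ᶠ x in l, δ ≤ u x) (hv : Tendsto v l (𝓝 0)) :
    Tendsto (fun x => v x / u x) l (𝓝 0) := by
  refine squeeze_zero_norm' ?_ (by simpa using hv.abs.div_const δ)
  filter_upwards [hu] with x hx
  rw [Real.norm_eq_abs, abs_div, abs_of_pos (hδ.trans_le hx)]
  exact div_le_div_of_nonneg_left (abs_nonneg _) hδ hx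

lemma tendsto_sq_div_sq_add_sq_zero {α : Type*} {l : Filter α} {u v : α → ℝ}
    (hv : ∀ᶠ x in l, v x ≠ 0) (h : Tendsto (fun x => u x / v x) l (𝓝 0)) :
    Tendsto (fun x => u x ^ 2 / (u x ^ 2 + v x ^ 2)) l (𝓝 0) := by
  have hlim : Tendsto (fun x => (u x / v x) ^ 2 / ((u x / v x) ^ 2 + 1)) l (𝓝 0) := by
    convert (h.pow 2).div ((h.pow 2).add_const 1) (by norm_num) using 2 <;> norm_num
  refine hlim.congr' ?_
  filter_upwards [hv] with x hx
  field_simp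

lemma tendsto_sq_div_sq_add_sq_one {α : Type*} {l : Filter α} {u v : α → ℝ}
    (hu : ∀ᶠ x in l, u x ≠ 0) (h : Tendsto (fun x => v x / u x) l (𝓝 0)) :
    Tendsto (fun x => u x ^ 2 / (u x ^ 2 + v x ^ 2)) l (𝓝 1) := by
  have hlim : Tendsto (fun x => (1 + (v x / u x) ^ 2)⁻¹) l (𝓝 1) := by
    simpa using ((h.pow 2).const_add 1).inv₀ (by norm_num)
  refine hlim.congr' ?_
  filter_upwards [hu] with x hx
  field_simp

lemma L_pos : 0 < L := by
  unfold L
  positivity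

lemma ωstar_mul_L (n : ℕ) : ωstar n * L = (2 * n + 1) * π / 2 := by
  unfold ωstar
  field_simp [L_pos.ne']

lemma tendsto_cos_mul_L_ωstar (n : ℕ) :
    Tendsto (fun ω => Real.cos (ω * L)) (𝓝 (ωstar n)) (𝓝 0) := by
  have hcont : Continuous fun ω => Real.cos (ω * L) := by fun_prop
  have h0 : Real.cos (ωstar n * L) = 0 :=
    Real.cos_eq_zero_iff.2 ⟨n, by rw [ωstar_mul_L]; push_cast; ring⟩
  simpa [h0] using hcont.tendsto (ωstar n)

lemma cos_mul_L_ne_zero {β ω : ℝ} {n : ℕ} (hω : ω ∈ Itilde β n \ {ωstar n}) :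
    Real.cos (ω * L) ≠ 0 := by
  obtain ⟨⟨hlo, hhi⟩, hne⟩ := hω
  have haL : 0 ≤ aβ β / L := div_nonneg (Real.arccos_nonneg _) L_pos.le
  intro h
  have hmem : ω * L ∈ Set.Ioo ((n : ℤ) * π) (((n : ℤ) + 1) * π) := by
    push_cast
    constructor
    · rw [← div_lt_iff₀ L_pos]; linarith
    · rw [← lt_div_iff₀ L_pos]; linarith
  refine hne (mul_right_cancel₀ L_pos.ne' ?_)
  rw [eq_of_cos_eq_zero_of_mem_Ioo h hmem, ωstar_mul_L]
  push_cast
  ring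

lemma v₀_ne_zero {β ω : ℝ} {n : ℕ} (hω : ω ∈ Itilde β n \ {ωstar n}) : v₀ ω ≠ 0 :=
  mul_ne_zero three_ne_zero (cos_mul_L_ne_zero hω)

lemma u₀_eq {β : ℝ} (hβ : -1 < Real.cos (2 * π * β)) (ω : ℝ) :
    u₀ β ω = (9 * Real.cos (ω * L) ^ 2 - 1 - 2 * Real.cos (2 * π * β) +
      √((9 * Real.cos (ω * L) ^ 2 - 1 - 2 * Real.cos (2 * π * β)) ^ 2
        - 36 * Real.cos (ω * L) ^ 2)) / 2 := by
  rw [u₀, r, g]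
  set c := Real.cos (2 * π * β)
  set t := Real.cos (ω * L)
  have hq : 0 < 2 + 2 * c := by linarith
  have hs : 0 < √(2 + 2 * c) := Real.sqrt_pos.2 hq
  have hroot := sqrt_div_sq_sub_mul (A := 9 * t ^ 2 - 3 - 2 * c) hs
  rw [Real.sq_sqrt hq.le,
    show (9 * t ^ 2 - 3 - 2 * c) ^ 2 - 4 * (2 + 2 * c) = (9 * t ^ 2 - 1 - 2 * c) ^ 2 - 36 * t ^ 2
      by ring] at hroot
  linear_combination (div_mul_cancel₀ (9 * t ^ 2 - 3 - 2 * c) hs.ne' + hroot) / 2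

lemma le_u₀ {β : ℝ} (hβ : -1 < Real.cos (2 * π * β)) (ω : ℝ) :
    (-1 - 2 * Real.cos (2 * π * β)) / 2 ≤ u₀ β ω := by
  rw [u₀_eq hβ]
  nlinarith [sq_nonneg (Real.cos (ω * L)), Real.sqrt_nonneg
    ((9 * Real.cos (ω * L) ^ 2 - 1 - 2 * Real.cos (2 * π * β)) ^ 2 - 36 * Real.cos (ω * L) ^ 2)]

lemma u₀_pos {β : ℝ} (hβ0 : 1 / 3 < β) (hβ1 : β < 1 / 2) (ω : ℝ) : 0 < u₀ β ω := by
  have := cos_two_pi_mul_lt_neg_half hβ0 hβ1.le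
  linarith [le_u₀ (neg_one_lt_cos_two_pi_mul (by linarith) hβ1) ω]

lemma tendsto_u₀_div_v₀ {β : ℝ} (hβ0 : 0 ≤ β) (hβ : β < 1 / 3) (n : ℕ) :
    Tendsto (fun ω => u₀ β ω / v₀ ω) (𝓝 (ωstar n)) (𝓝 0) := by
  have hc := neg_half_lt_cos_two_pi_mul hβ0 hβ
  set c := Real.cos (2 * π * β)
  have hT := tendsto_cos_mul_L_ωstar n
  have hD : Tendsto (fun ω => 1 + 2 * c - 9 * Real.cos (ω * L) ^ 2) (𝓝 (ωstar n))
      (𝓝 (1 + 2 * c)) := by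
    simpa using ((hT.pow 2).const_mul 9).const_sub (1 + 2 * c)
  have hbound : Tendsto (fun ω => 6 * |Real.cos (ω * L)| / (1 + 2 * c - 9 * Real.cos (ω * L) ^ 2))
      (𝓝 (ωstar n)) (𝓝 0) := by
    convert (hT.abs.const_mul 6).div hD (by linarith) using 2 <;> simp
  refine squeeze_zero_norm' ?_ hbound
  filter_upwards [hD.eventually (lt_mem_nhds (by linarith : (0 : ℝ) < 1 + 2 * c))] with ω hω
  rw [Real.norm_eq_abs, u₀_eq (by linarith) ω, v₀]
  convert abs_add_sqrt_sq_sub_div_le (t := Real.cos (ω * L))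
    (by linarith : 9 * Real.cos (ω * L) ^ 2 - 1 - 2 * c < 0) using 2
  ring

lemma tendsto_v₀_div_u₀ {β : ℝ} (hβ0 : 1 / 3 < β) (hβ1 : β < 1 / 2) (n : ℕ) :
    Tendsto (fun ω => v₀ ω / u₀ β ω) (𝓝 (ωstar n)) (𝓝 0) := by
  have hc := cos_two_pi_mul_lt_neg_half hβ0 hβ1.le
  refine tendsto_div_zero_of_le (by linarith) (Eventually.of_forall
    (le_u₀ (neg_one_lt_cos_two_pi_mul (by linarith) hβ1))) ?_
  have hv := (tendsto_cos_mul_L_ωstar n).const_mul 3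
  rwa [mul_zero] at hv

theorem stmt_15_general (β : ℝ) (hβ0 : 0 < β) (hβ1 : β < 1 / 2) (n : ℕ) :
    (∀ ω ∈ Itilde β n \ {ωstar n}, (u₀ β ω, v₀ ω) ≠ (0, 0)) ∧
    (β < 1 / 3 →
      Tendsto (fun ω : ℝ => u₀ β ω ^ 2 / (u₀ β ω ^ 2 + v₀ ω ^ 2))
        (𝓝[Itilde β n \ {ωstar n}] (ωstar n)) (𝓝 0)) ∧
    (1 / 3 < β →
      Tendsto (fun ω : ℝ => u₀ β ω ^ 2 / (u₀ β ω ^ 2 + v₀ ω ^ 2))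
        (𝓝[Itilde β n \ {ωstar n}] (ωstar n)) (𝓝 1)) := by
  refine ⟨fun ω hω h => v₀_ne_zero hω (congrArg Prod.snd h), fun hβ => ?_, fun hβ => ?_⟩
  · exact tendsto_sq_div_sq_add_sq_zero
      (eventually_nhdsWithin_of_forall fun ω hω => v₀_ne_zero hω)
      ((tendsto_u₀_div_v₀ hβ0.le hβ n).mono_left nhdsWithin_le_nhds)
  · exact tendsto_sq_div_sq_add_sq_one
      (Eventually.of_forall fun ω => (u₀_pos hβ hβ1 ω).ne')
      ((tendsto_v₀_div_u₀ hβ hβ1 n).mono_left nhdsWithin_le_nhds)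

theorem stmt_15 (β : ℝ) (hβ0 : 0 < β) (hβ1 : β < 1 / 2) (hβ3 : β ≠ 1 / 3) (n : ℕ) :
    (∀ ω ∈ Itilde β n \ {ωstar n}, (u₀ β ω, v₀ ω) ≠ (0, 0)) ∧
    (β < 1 / 3 →
      Tendsto (fun ω : ℝ => u₀ β ω ^ 2 / (u₀ β ω ^ 2 + v₀ ω ^ 2))
        (𝓝[Itilde β n \ {ωstar n}] (ωstar n)) (𝓝 0)) ∧
    (1 / 3 < β →
      Tendsto (fun ω : ℝ => u₀ β ω ^ 2 / (u₀ β ω ^ 2 + v₀ ω ^ 2))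
        (𝓝[Itilde β n \ {ωstar n}] (ωstar n)) (𝓝 1)) :=
  stmt_15_general β hβ0 hβ1 n
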